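/- arXiv:1207.0149 — 2 statements merged into one kernel-verified Lean document; each statement's English description precedes it below -/
import Mathlib

section
/- Fix k ≥ 1 and a real constant c, and set p = p(n) = (((k/2+1)·log n + (k/2)·log log n + c)/n)^(1/(k+1)). Then as n → ∞, the expected number of maximal (k+1)-cliques in G(n,p), namely C(n,k+1) · p^(C(k+1,2)) · (1-p^(k+1))^(n-k-1), converges to ((k/2+1)^(k/2)/(k+1)!) · e^(-c). -/
open Finset Filter Topology

/-- The set of potential edges on `Fin n`: non-diagonal elements of `Sym2 (Fin n)`. -/
abbrev PotEdge (n : ℕ) := {s : Sym2 (Fin n) // ¬ s.IsDiag}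

/-- A graph on `[n]` is identified with its edge set. -/
abbrev EdgeSet (n : ℕ) := Finset (PotEdge n)

/-- The `G(n,p)` weight of a fixed graph with edge set `E`:
each of the `C(n,2)` potential edges is present independently with probability `p`. -/
noncomputable def edgeWeight (n : ℕ) (p : ℝ) (E : EdgeSet n) : ℝ :=
  p ^ E.card * (1 - p) ^ (Fintype.card (PotEdge n) - E.card)

open scoped Classical in
/-- Probability of an event `A` under the Erdős–Rényi measure `G(n,p)`. -/
noncomputable def Pr (n : ℕ) (p : ℝ) (A : EdgeSet n → Prop) : ℝ :=
  ∑ E ∈ Finset.univ.filter A, edgeWeight n p E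

/-- Adjacency of `u` and `v` in the graph with edge set `E`. -/
def Adj {n : ℕ} (E : EdgeSet n) (u v : Fin n) : Prop :=
  ∃ e ∈ E, (e : Sym2 (Fin n)) = s(u, v)

/-- `S` spans a clique of the graph with edge set `E`. -/
def IsClique {n : ℕ} (E : EdgeSet n) (S : Finset (Fin n)) : Prop :=
  ∀ u ∈ S, ∀ v ∈ S, u ≠ v → Adj E u v

/-- `S` spans a maximal clique: a clique with no common neighbor outside `S`. -/
def IsMaxClique {n : ℕ} (E : EdgeSet n) (S : Finset (Fin n)) : Prop :=
  IsClique E S ∧ ¬ ∃ w : Fin n, w ∉ S ∧ ∀ u ∈ S, Adj E w u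

open scoped Classical in
/-- The number of maximal `j`-cliques in the graph with edge set `E`. -/
noncomputable def numMaxCliques {n : ℕ} (E : EdgeSet n) (j : ℕ) : ℕ :=
  (Finset.univ.filter (fun S : Finset (Fin n) => S.card = j ∧ IsMaxClique E S)).card

open scoped Classical in
/-- The number of `j`-cliques in the graph with edge set `E`. -/
noncomputable def numCliques {n : ℕ} (E : EdgeSet n) (j : ℕ) : ℕ :=
  (Finset.univ.filter (fun S : Finset (Fin n) => S.card = j ∧ IsClique E S)).card

open scoped Classical in
/-- The number of common neighbors of `S` (the number of vertices of the link of `S`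
in the flag complex). -/
noncomputable def linkCard {n : ℕ} (E : EdgeSet n) (S : Finset (Fin n)) : ℕ :=
  (Finset.univ.filter (fun v : Fin n => v ∉ S ∧ ∀ u ∈ S, Adj E v u)).card

/-!
Write `t = p^(k+1)`, so that `L = n t = (k/2+1) log n + (k/2) log log n + c` and
`p^C(k+1,2) = t^(k/2)`. Since `n t² → 0`, `(1 - t)^(n-k-1) = exp(-L + o(1))`, and
`C(n,k+1) ~ n^(k+1)/(k+1)!`, so the expectation is
`n^(k+1)/(k+1)! · (L/n)^(k/2) · n^(-(k/2+1)) (log n)^(-k/2) e^(-c) · (1 + o(1))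
  = (L / log n)^(k/2) e^(-c) / (k+1)! · (1 + o(1))`, and `L / log n → k/2 + 1`.
-/

open Real Asymptotics

/-- `linkMean k c n = n p(n)^(k+1)`. -/
noncomputable def linkMean (k : ℕ) (c : ℝ) (n : ℕ) : ℝ :=
  ((k : ℝ) / 2 + 1) * log n + ((k : ℝ) / 2) * log (log n) + c

lemma tendsto_log_natCast_atTop : Tendsto (fun n : ℕ => log n) atTop atTop :=
  tendsto_log_atTop.comp tendsto_natCast_atTop_atTop

lemma tendsto_log_choose_sub_mul_log (j : ℕ) :
    Tendsto (fun n : ℕ => log (n.choose j) - j * log n) atTop (𝓝 (-log j.factorial)) := by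
  have hfact : (0 : ℝ) < j.factorial := by exact_mod_cast j.factorial_pos
  have hratio :
      Tendsto (fun n : ℕ => (n.choose j : ℝ) / (n ^ j / j.factorial)) atTop (𝓝 1) := by
    refine (isEquivalent_iff_tendsto_one ?_).mp (isEquivalent_choose j)
    filter_upwards [eventually_gt_atTop 0] with n hn
    positivity
  have hlog := ((continuousAt_log one_ne_zero).tendsto.comp hratio).sub_const (log j.factorial)
  rw [log_one, zero_sub] at hlog
  refine hlog.congr' ?_
  filter_upwards [eventually_ge_atTop j, eventually_gt_atTop 0] with n hjn hn
  have hchoose : (0 : ℝ) < n.choose j := by exact_mod_cast Nat.choose_pos hjn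
  simp only [Function.comp_apply]
  rw [log_div hchoose.ne' (by positivity), log_div (by positivity) hfact.ne', log_pow]
  ring

section linkMean

variable (k : ℕ) (c : ℝ)

lemma tendsto_linkMean_div_log :
    Tendsto (fun n : ℕ => linkMean k c n / log n) atTop (𝓝 ((k : ℝ) / 2 + 1)) := by
  have hloglog : Tendsto (fun n : ℕ => log (log n) / log n) atTop (𝓝 0) := by
    simpa [Function.comp_def] using
      (tendsto_pow_log_div_mul_add_atTop 1 0 1 one_ne_zero).comp tendsto_log_natCast_atTop
  have h := ((tendsto_const_nhds (x := (k : ℝ) / 2 + 1)).add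
    (hloglog.const_mul ((k : ℝ) / 2))).add
      ((tendsto_const_nhds (x := c)).div_atTop tendsto_log_natCast_atTop)
  rw [mul_zero, add_zero, add_zero] at h
  refine h.congr' ?_
  filter_upwards [tendsto_log_natCast_atTop.eventually_gt_atTop 0] with n hn
  simp only [linkMean]
  field_simp

lemma eventually_linkMean_pos : ∀ᶠ n : ℕ in atTop, 0 < linkMean k c n := by
  filter_upwards [(tendsto_linkMean_div_log k c).eventually_const_lt (by positivity),
    tendsto_log_natCast_atTop.eventually_gt_atTop 0] with n hratio hlog
  exact (div_pos_iff_of_pos_right hlog).mp hratio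

lemma tendsto_linkMean_pow_div (j : ℕ) :
    Tendsto (fun n : ℕ => linkMean k c n ^ j / n) atTop (𝓝 0) := by
  have hlog : Tendsto (fun n : ℕ => log n ^ j / n) atTop (𝓝 0) := by
    simpa [Function.comp_def] using
      (tendsto_pow_log_div_mul_add_atTop 1 0 j one_ne_zero).comp tendsto_natCast_atTop_atTop
  have h := ((tendsto_linkMean_div_log k c).pow j).mul hlog
  rw [mul_zero] at h
  refine h.congr' ?_
  filter_upwards [tendsto_log_natCast_atTop.eventually_gt_atTop 0] with n hn
  rw [div_pow, div_mul_div_cancel₀ (pow_ne_zero j hn.ne')]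

end linkMean

lemma abs_log_one_sub_add_self_le {t : ℝ} (ht : |t| ≤ 1 / 2) :
    |log (1 - t) + t| ≤ 2 * t ^ 2 := by
  have h := abs_log_sub_add_sum_range_le (by linarith : |t| < 1) 1
  simp only [Finset.range_one, Finset.sum_singleton, zero_add, pow_one, Nat.cast_zero,
    div_one, Nat.reduceAdd, sq_abs] at h
  calc |log (1 - t) + t| = |t + log (1 - t)| := by rw [add_comm]
    _ ≤ t ^ 2 / (1 - |t|) := h
    _ ≤ 2 * t ^ 2 := by
      rw [div_le_iff₀ (by linarith)]
      nlinarith [sq_nonneg t]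

lemma tendsto_mul_log_one_sub_add_self {ι : Type*} {l : Filter ι} {m t : ι → ℝ}
    (ht : Tendsto t l (𝓝 0)) (hmt : Tendsto (fun i => m i * t i ^ 2) l (𝓝 0)) :
    Tendsto (fun i => m i * (log (1 - t i) + t i)) l (𝓝 0) := by
  have hbound : Tendsto (fun i => 2 * (|m i| * t i ^ 2)) l (𝓝 0) := by
    simpa [abs_mul] using hmt.abs.const_mul 2
  have hsmall : Tendsto (fun i => |t i|) l (𝓝 0) := by simpa using ht.abs
  refine squeeze_zero_norm' ?_ hbound
  filter_upwards [hsmall.eventually_le_const (by norm_num : (0 : ℝ) < 1 / 2)] with i hti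
  rw [Real.norm_eq_abs, abs_mul]
  calc |m i| * |log (1 - t i) + t i| ≤ |m i| * (2 * t i ^ 2) :=
        mul_le_mul_of_nonneg_left (abs_log_one_sub_add_self_le hti) (abs_nonneg _)
    _ = 2 * (|m i| * t i ^ 2) := by ring

lemma rpow_one_div_succ_pow {t : ℝ} (ht : 0 ≤ t) (k : ℕ) :
    (t ^ ((1 : ℝ) / (k + 1))) ^ (k + 1) = t := by
  simpa [one_div] using rpow_inv_natCast_pow ht k.succ_ne_zero

lemma rpow_one_div_succ_pow_choose_two {t : ℝ} (ht : 0 ≤ t) (k : ℕ) :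
    (t ^ ((1 : ℝ) / (k + 1))) ^ ((k + 1).choose 2) = t ^ ((k : ℝ) / 2) := by
  rw [← rpow_natCast, ← rpow_mul ht, Nat.cast_choose_two]
  congr 1
  push_cast
  field_simp
  ring

lemma choose_mul_rpow_mul_pow_eq_exp {n j m : ℕ} {t : ℝ} (hjn : j ≤ n) (ht0 : 0 < t)
    (ht1 : t < 1) (x : ℝ) :
    (n.choose j : ℝ) * t ^ x * (1 - t) ^ m
      = exp (log (n.choose j) + log t * x + m * log (1 - t)) := by
  have hchoose : (0 : ℝ) < n.choose j := by exact_mod_cast Nat.choose_pos hjn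
  rw [exp_add, exp_add, exp_log hchoose, ← rpow_def_of_pos ht0, exp_nat_mul,
    exp_log (by linarith)]

lemma tendsto_natSub_mul_log_one_sub_linkMean_div_add_linkMean (k : ℕ) (c : ℝ) :
    Tendsto (fun n : ℕ =>
        ((n - k - 1 : ℕ) : ℝ) * log (1 - linkMean k c n / n) + linkMean k c n)
      atTop (𝓝 0) := by
  have ht : Tendsto (fun n : ℕ => linkMean k c n / n) atTop (𝓝 0) := by
    simpa using tendsto_linkMean_pow_div k c 1
  have hnt : Tendsto (fun n : ℕ => (n : ℝ) * (linkMean k c n / n) ^ 2) atTop (𝓝 0) := by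
    refine (tendsto_linkMean_pow_div k c 2).congr' ?_
    filter_upwards [eventually_gt_atTop 0] with n hn
    field_simp
  have hlog : Tendsto (fun n : ℕ => log (1 - linkMean k c n / n)) atTop (𝓝 0) := by
    simpa [Function.comp_def] using
      (continuousAt_log one_ne_zero).tendsto.comp (by simpa using ht.const_sub 1)
  have h := (tendsto_mul_log_one_sub_add_self ht hnt).sub (hlog.const_mul ((k : ℝ) + 1))
  rw [mul_zero, sub_zero] at h
  refine h.congr' ?_
  filter_upwards [eventually_gt_atTop k] with n hn
  have hn0 : (n : ℝ) ≠ 0 := Nat.cast_ne_zero.mpr (by omega)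
  rw [show n - k - 1 = n - (k + 1) by omega, Nat.cast_sub hn]
  field_simp
  push_cast
  ring

lemma tendsto_choose_mul_linkMean_div_rpow_mul_pow (k : ℕ) (c : ℝ) :
    Tendsto (fun n : ℕ => (n.choose (k + 1) : ℝ) * (linkMean k c n / n) ^ ((k : ℝ) / 2)
        * (1 - linkMean k c n / n) ^ (n - k - 1))
      atTop
      (𝓝 (((k : ℝ) / 2 + 1) ^ ((k : ℝ) / 2) / ((k + 1).factorial : ℝ) * exp (-c))) := by
  have ha : (0 : ℝ) < (k : ℝ) / 2 + 1 := by positivity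
  -- `log` of the expectation, split into three convergent parts using
  -- `linkMean k c n - (k/2 + 1) log n - (k/2) log log n = c`
  have hS := ((((tendsto_log_choose_sub_mul_log (k + 1)).add
    (((continuousAt_log ha.ne').tendsto.comp (tendsto_linkMean_div_log k c)).const_mul
      ((k : ℝ) / 2))).add
    (tendsto_natSub_mul_log_one_sub_linkMean_div_add_linkMean k c)).sub_const c)
  have hlimit : exp (-log (k + 1).factorial + (k : ℝ) / 2 * log ((k : ℝ) / 2 + 1) + 0 - c)
      = ((k : ℝ) / 2 + 1) ^ ((k : ℝ) / 2) / ((k + 1).factorial : ℝ) * exp (-c) := by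
    rw [rpow_def_of_pos ha, add_zero, sub_eq_add_neg, exp_add, exp_add, exp_neg,
      exp_log (by positivity)]
    ring_nf
  have h := (continuous_exp.tendsto _).comp hS
  rw [hlimit] at h
  refine h.congr' ?_
  filter_upwards [eventually_linkMean_pos k c, eventually_gt_atTop k,
    (tendsto_linkMean_pow_div k c 1).eventually_lt_const one_pos,
    tendsto_log_natCast_atTop.eventually_gt_atTop 0] with n hL hn ht hlog
  have hn0 : (0 : ℝ) < n := by exact_mod_cast (by omega : 0 < n)
  rw [pow_one] at ht
  rw [choose_mul_rpow_mul_pow_eq_exp (by omega) (div_pos hL hn0) ht]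
  simp only [Function.comp_apply]
  rw [log_div hL.ne' hlog.ne', log_div hL.ne' hn0.ne']
  congr 1
  simp only [linkMean]
  push_cast
  ring

theorem stmt2_general (k : ℕ) (c : ℝ) (p : ℕ → ℝ)
    (hp : ∀ n : ℕ, p n =
      ((((k : ℝ) / 2 + 1) * Real.log n + ((k : ℝ) / 2) * Real.log (Real.log n) + c) / n)
        ^ ((1 : ℝ) / (k + 1))) :
    Tendsto (fun n : ℕ =>
        (n.choose (k + 1) : ℝ) * p n ^ ((k + 1).choose 2) * (1 - p n ^ (k + 1)) ^ (n - k - 1))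
      atTop
      (𝓝 (((k : ℝ) / 2 + 1) ^ ((k : ℝ) / 2) / ((k + 1).factorial : ℝ) * Real.exp (-c))) := by
  refine (tendsto_choose_mul_linkMean_div_rpow_mul_pow k c).congr' ?_
  filter_upwards [eventually_linkMean_pos k c] with n hL
  have hpn : p n = (linkMean k c n / n) ^ ((1 : ℝ) / (k + 1)) := hp n
  have ht : 0 ≤ linkMean k c n / n := div_nonneg hL.le n.cast_nonneg
  rw [hpn, rpow_one_div_succ_pow_choose_two ht, rpow_one_div_succ_pow ht]

/-- For `p = (((k/2+1) log n + (k/2) log log n + c)/n)^(1/(k+1))`, the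
expected number of maximal `(k+1)`-cliques in `G(n,p)` converges to
`(k/2+1)^(k/2)/(k+1)! * e^(-c)` as `n → ∞`. -/
theorem stmt2 (k : ℕ) (hk : 1 ≤ k) (c : ℝ) (p : ℕ → ℝ)
    (hp : ∀ n : ℕ, p n =
      ((((k : ℝ) / 2 + 1) * Real.log n + ((k : ℝ) / 2) * Real.log (Real.log n) + c) / n)
        ^ ((1 : ℝ) / (k + 1))) :
    Tendsto (fun n : ℕ =>
        (n.choose (k + 1) : ℝ) * p n ^ ((k + 1).choose 2) * (1 - p n ^ (k + 1)) ^ (n - k - 1))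
      atTop
      (𝓝 (((k : ℝ) / 2 + 1) ^ ((k : ℝ) / 2) / ((k + 1).factorial : ℝ) * Real.exp (-c))) :=
  stmt2_general k c p hp
end

section
/- Fix k ≥ 1. If p = p(n) satisfies p ≥ (((k/2+1)·log n + (k/2)·log log n + ω(n))/n)^(1/(k+1)) for some function ω(n) → ∞, then the probability that G(n,p) contains a maximal (k+1)-clique tends to 0 as n → ∞. -/
open Finset Filter Topology

/-! A fixed `(k+1)`-set `S` is a maximal clique when its `C(k+1,2)` edges are present and,
for each of the `n-k-1` outside vertices `w`, the star from `w` to `S` is incomplete. These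
edge sets are pairwise disjoint, hence independent, so the expected number of maximal
`(k+1)`-cliques is at most `n^(k+1) q^(k/2) (1-q)^(n-k-1) ≤ n^(k+1) q^(k/2) e^(-q(n-k-1))`
with `q = p^(k+1)`. As a function of `q` this decreases once `q(n-k-1) ≥ k/2`, so `q` may be
replaced by its lower bound `T/n`, `T = (k/2+1) log n + (k/2) log log n + ω`; the
`log n` and `log log n` terms of `T` are chosen to cancel, leaving
`exp((k/2) log(T / log n) + k + 1 - ω) ≤ exp((k/2) log(k+1+ω) + k + 1 - ω) → 0`.
Markov's inequality (here a union bound over `S`) concludes. -/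

open scoped Classical

section BernoulliSubset

variable {X : Type*}

noncomputable def bernoulliProb (p : ℝ) (A : Finset X) (P : Finset X → Prop) : ℝ :=
  ∑ s ∈ A.powerset with P s, p ^ #s * (1 - p) ^ (#A - #s)

lemma bernoulliProb_congr (p : ℝ) (A : Finset X) {P Q : Finset X → Prop}
    (h : ∀ s ⊆ A, P s ↔ Q s) : bernoulliProb p A P = bernoulliProb p A Q :=
  sum_congr (filter_congr fun s hs => h s (mem_powerset.1 hs)) fun _ _ => rfl

lemma bernoulliProb_true (p : ℝ) (A : Finset X) : bernoulliProb p A (fun _ => True) = 1 := by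
  simp [bernoulliProb, sum_pow_mul_eq_add_pow]

lemma bernoulliProb_not (p : ℝ) (A : Finset X) (P : Finset X → Prop) :
    bernoulliProb p A (fun s => ¬ P s) = 1 - bernoulliProb p A P := by
  rw [← bernoulliProb_true p A, eq_sub_iff_add_eq, bernoulliProb, bernoulliProb,
    add_comm, sum_filter_add_sum_filter_not]
  simp [bernoulliProb]

lemma bernoulliProb_eq_self (p : ℝ) (A : Finset X) :
    bernoulliProb p A (· = A) = p ^ #A := by
  simp [bernoulliProb, filter_eq']

lemma bernoulliProb_union_of_disjoint [DecidableEq X] (p : ℝ) {B C : Finset X}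
    (hBC : Disjoint B C) (P Q : Finset X → Prop) :
    bernoulliProb p (B ∪ C) (fun s => P (s ∩ B) ∧ Q (s ∩ C)) =
      bernoulliProb p B P * bernoulliProb p C Q := by
  have inter_left {s t : Finset X} (hs : s ⊆ B) (ht : t ⊆ C) : (s ∪ t) ∩ B = s := by
    grind [Finset.disjoint_left]
  have inter_right {s t : Finset X} (hs : s ⊆ B) (ht : t ⊆ C) : (s ∪ t) ∩ C = t := by
    grind [Finset.disjoint_left]
  rw [bernoulliProb, bernoulliProb, bernoulliProb, sum_mul_sum, ← sum_product']
  symm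
  refine sum_nbij' (fun st => st.1 ∪ st.2) (fun s => (s ∩ B, s ∩ C)) ?_ ?_ ?_ ?_ ?_
  · simp only [mem_product, mem_filter, mem_powerset, and_imp, Prod.forall]
    intro s t hs hP ht hQ
    rw [inter_left hs ht, inter_right hs ht]
    exact ⟨union_subset_union hs ht, hP, hQ⟩
  · simp only [mem_product, mem_filter, mem_powerset]
    intro s ⟨_, hP, hQ⟩
    exact ⟨⟨inter_subset_right, hP⟩, inter_subset_right, hQ⟩
  · simp only [mem_product, mem_filter, mem_powerset, and_imp, Prod.forall]
    intro s t hs _ ht _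
    rw [inter_left hs ht, inter_right hs ht]
  · simp only [mem_filter, mem_powerset]
    intro s ⟨hs, _⟩
    rw [← inter_union_distrib_left, inter_eq_left.2 hs]
  · simp only [mem_product, mem_filter, mem_powerset, and_imp, Prod.forall]
    intro s t hs _ ht _
    have := card_le_card hs
    have := card_le_card ht
    rw [card_union_of_disjoint (hBC.mono hs ht), card_union_of_disjoint hBC,
      show #B + #C - (#s + #t) = (#B - #s) + (#C - #t) by omega, pow_add, pow_add]
    ring

lemma bernoulliProb_inter_sdiff [DecidableEq X] (p : ℝ) {A B : Finset X} (hB : B ⊆ A)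
    (P Q : Finset X → Prop) :
    bernoulliProb p A (fun s => P (s ∩ B) ∧ Q (s ∩ (A \ B))) =
      bernoulliProb p B P * bernoulliProb p (A \ B) Q := by
  have := bernoulliProb_union_of_disjoint p (disjoint_sdiff (s := B) (t := A)) P Q
  rwa [union_sdiff_of_subset hB] at this

lemma bernoulliProb_forall_inter [DecidableEq X] {ι : Type*} (p : ℝ) (B : ι → Finset X)
    (P : ι → Finset X → Prop) (I : Finset ι) {A : Finset X} (hBA : ∀ i ∈ I, B i ⊆ A)
    (hB : (I : Set ι).PairwiseDisjoint B) :
    bernoulliProb p A (fun s => ∀ i ∈ I, P i (s ∩ B i)) =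
      ∏ i ∈ I, bernoulliProb p (B i) (P i) := by
  induction I using Finset.induction_on generalizing A with
  | empty => simpa using bernoulliProb_true p A
  | @insert j I hj ih =>
    simp only [coe_insert, Set.pairwiseDisjoint_insert, forall_mem_insert] at hBA hB
    have hBA' : ∀ i ∈ I, B i ⊆ A \ B j := fun i hi =>
      subset_sdiff.2 ⟨hBA.2 i hi, (hB.2 i hi (by rintro rfl; exact hj hi)).symm⟩
    have hinter : ∀ s, ∀ i ∈ I, s ∩ (A \ B j) ∩ B i = s ∩ B i := fun s i hi => by
      rw [inter_assoc, inter_eq_right.2 (hBA' i hi)]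
    rw [prod_insert hj, ← ih hBA' hB.1, ← bernoulliProb_inter_sdiff p hBA.1]
    refine bernoulliProb_congr p A fun s _ => ?_
    rw [forall_mem_insert]
    exact and_congr_right' (forall₂_congr fun i hi => by rw [hinter s i hi])

end BernoulliSubset

section Edges

variable {n : ℕ}

def cliqueEdges (S : Finset (Fin n)) : EdgeSet n :=
  univ.filter fun e => ∀ v ∈ (e : Sym2 (Fin n)), v ∈ S

def starEdges (S : Finset (Fin n)) (w : Fin n) : EdgeSet n :=
  univ.filter fun e => ∃ u ∈ S, (e : Sym2 (Fin n)) = s(w, u)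

lemma mem_cliqueEdges {S : Finset (Fin n)} {e : PotEdge n} :
    e ∈ cliqueEdges S ↔ ∀ v ∈ (e : Sym2 (Fin n)), v ∈ S := by
  simp [cliqueEdges]

lemma mem_starEdges {S : Finset (Fin n)} {w : Fin n} {e : PotEdge n} :
    e ∈ starEdges S w ↔ ∃ u ∈ S, (e : Sym2 (Fin n)) = s(w, u) := by
  simp [starEdges]

lemma adj_iff_mem {E : EdgeSet n} {u v : Fin n} (huv : u ≠ v) :
    Adj E u v ↔ (⟨s(u, v), Sym2.mk_isDiag_iff.not.2 huv⟩ : PotEdge n) ∈ E :=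
  ⟨fun ⟨e, he, h⟩ => by rwa [show e = ⟨s(u, v), _⟩ from Subtype.ext h] at he,
    fun h => ⟨_, h, rfl⟩⟩

lemma isClique_iff_cliqueEdges_subset {E : EdgeSet n} {S : Finset (Fin n)} :
    IsClique E S ↔ cliqueEdges S ⊆ E := by
  refine ⟨fun h ⟨e, he⟩ hS => ?_, fun h u hu v hv huv => (adj_iff_mem huv).2 (h ?_)⟩
  · induction e using Sym2.ind with
    | h a b =>
      rw [mem_cliqueEdges] at hS
      have hab : a ≠ b := by simpa using he
      exact (adj_iff_mem hab).1 (h a (hS a (by simp)) b (hS b (by simp)) hab)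
  · rw [mem_cliqueEdges]
    intro x hx
    rcases Sym2.mem_iff.1 hx with rfl | rfl <;> assumption

lemma forall_adj_iff_starEdges_subset {E : EdgeSet n} {S : Finset (Fin n)} {w : Fin n}
    (hw : w ∉ S) : (∀ u ∈ S, Adj E w u) ↔ starEdges S w ⊆ E := by
  have hne {u : Fin n} (hu : u ∈ S) : w ≠ u := fun h => hw (h ▸ hu)
  refine ⟨fun h e he => ?_, fun h u hu => (adj_iff_mem (hne hu)).2 (h ?_)⟩
  · obtain ⟨u, hu, hwu⟩ := mem_starEdges.1 he
    rw [show e = ⟨s(w, u), _⟩ from Subtype.ext hwu]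
    exact (adj_iff_mem (hne hu)).1 (h u hu)
  · exact mem_starEdges.2 ⟨u, hu, rfl⟩

lemma card_cliqueEdges (S : Finset (Fin n)) : #(cliqueEdges S) = (#S).choose 2 := by
  rw [← Sym2.card_image_offDiag, ← card_map (Function.Embedding.subtype _)]
  congr 1
  ext z
  induction z using Sym2.ind with
  | h a b =>
    simp only [Finset.mem_map, mem_cliqueEdges, Function.Embedding.subtype_apply,
      Subtype.exists, exists_and_left, exists_prop, exists_eq_right_right, Sym2.mem_iff,
      forall_eq_or_imp, forall_eq, Sym2.mk_isDiag_iff, mem_image, mem_offDiag, Prod.exists,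
      Function.uncurry_apply_pair, Sym2.eq, Sym2.rel_iff', Prod.mk.injEq, Prod.swap_prod_mk]
    constructor
    · rintro ⟨⟨ha, hb⟩, hab⟩
      exact ⟨a, b, ⟨ha, hb, hab⟩, Or.inl ⟨rfl, rfl⟩⟩
    · rintro ⟨x, y, ⟨hx, hy, hxy⟩, ⟨rfl, rfl⟩ | ⟨rfl, rfl⟩⟩
      exacts [⟨⟨hx, hy⟩, hxy⟩, ⟨⟨hy, hx⟩, Ne.symm hxy⟩]

lemma card_starEdges {S : Finset (Fin n)} {w : Fin n} (hw : w ∉ S) : #(starEdges S w) = #S := by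
  have hne {u : Fin n} (hu : u ∈ S) : w ≠ u := fun h => hw (h ▸ hu)
  symm
  refine card_bij (fun u hu => ⟨s(w, u), Sym2.mk_isDiag_iff.not.2 (hne hu)⟩)
    (fun u hu => mem_starEdges.2 ⟨u, hu, rfl⟩) (fun u hu u' hu' h => ?_) (fun e he => ?_)
  · rcases Sym2.eq_iff.1 (congrArg Subtype.val h) with ⟨-, h⟩ | ⟨rfl, -⟩
    exacts [h, absurd hu' hw]
  · obtain ⟨u, hu, hwu⟩ := mem_starEdges.1 he
    exact ⟨u, hu, Subtype.ext hwu.symm⟩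

lemma disjoint_starEdges_cliqueEdges {S : Finset (Fin n)} {w : Fin n} (hw : w ∉ S) :
    Disjoint (starEdges S w) (cliqueEdges S) := by
  refine disjoint_left.2 fun e he hc => ?_
  obtain ⟨u, -, hwu⟩ := mem_starEdges.1 he
  exact hw (mem_cliqueEdges.1 hc w (by simp [hwu]))

lemma pairwiseDisjoint_starEdges (S : Finset (Fin n)) :
    (↑Sᶜ : Set (Fin n)).PairwiseDisjoint (starEdges S) := by
  intro w hw w' hw' hne
  refine disjoint_left.2 fun e he he' => ?_
  obtain ⟨u, hu, hwu⟩ := mem_starEdges.1 he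
  obtain ⟨u', hu', hwu'⟩ := mem_starEdges.1 he'
  rcases Sym2.eq_iff.1 (hwu.symm.trans hwu') with ⟨h, -⟩ | ⟨rfl, -⟩
  exacts [hne h, by simp at hw; exact hw hu']

end Edges

section ErdosRenyi

variable {n : ℕ}

lemma Pr_eq_bernoulliProb (p : ℝ) (A : EdgeSet n → Prop) :
    Pr n p A = bernoulliProb p univ A := by
  simp [Pr, bernoulliProb, edgeWeight]

lemma edgeWeight_nonneg {p : ℝ} (hp0 : 0 ≤ p) (hp1 : p ≤ 1) (E : EdgeSet n) :
    0 ≤ edgeWeight n p E :=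
  mul_nonneg (pow_nonneg hp0 _) (pow_nonneg (sub_nonneg.2 hp1) _)

lemma Pr_nonneg {p : ℝ} (hp0 : 0 ≤ p) (hp1 : p ≤ 1) (A : EdgeSet n → Prop) :
    0 ≤ Pr n p A :=
  sum_nonneg fun E _ => edgeWeight_nonneg hp0 hp1 E

lemma Pr_exists_le_sum {ι : Type*} {p : ℝ} (hp0 : 0 ≤ p) (hp1 : p ≤ 1) (I : Finset ι)
    (A : ι → EdgeSet n → Prop) :
    Pr n p (fun E => ∃ i ∈ I, A i E) ≤ ∑ i ∈ I, Pr n p (A i) := by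
  simp only [Pr, sum_filter]
  rw [sum_comm]
  refine sum_le_sum fun E _ => ?_
  have hterm (i : ι) : 0 ≤ if A i E then edgeWeight n p E else 0 := by
    split_ifs
    exacts [edgeWeight_nonneg hp0 hp1 E, le_rfl]
  split_ifs with h
  · obtain ⟨i, hi, hA⟩ := h
    simpa [hA] using single_le_sum (fun i _ => hterm i) hi
  · exact sum_nonneg fun i _ => hterm i

lemma isMaxClique_iff_subset {E : EdgeSet n} {S : Finset (Fin n)} :
    IsMaxClique E S ↔ cliqueEdges S ⊆ E ∧ ∀ w ∈ Sᶜ, ¬ starEdges S w ⊆ E := by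
  rw [IsMaxClique, isClique_iff_cliqueEdges_subset]
  refine and_congr_right' ⟨fun h w hw hsub => ?_, fun h ⟨w, hw, hadj⟩ => ?_⟩
  · exact h ⟨w, mem_compl.1 hw, (forall_adj_iff_starEdges_subset (mem_compl.1 hw)).2 hsub⟩
  · exact h w (mem_compl.2 hw) ((forall_adj_iff_starEdges_subset hw).1 hadj)

lemma Pr_isMaxClique (p : ℝ) (S : Finset (Fin n)) :
    Pr n p (fun E => IsMaxClique E S) = p ^ (#S).choose 2 * (1 - p ^ #S) ^ (n - #S) := by
  set K := cliqueEdges S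
  have hstar : ∀ w ∈ Sᶜ, starEdges S w ⊆ univ \ K := fun w hw =>
    subset_sdiff.2 ⟨subset_univ _, disjoint_starEdges_cliqueEdges (mem_compl.1 hw)⟩
  have hevent : Pr n p (fun E => IsMaxClique E S) = bernoulliProb p univ (fun E =>
      E ∩ K = K ∧ ∀ w ∈ Sᶜ, ¬ E ∩ (univ \ K) ∩ starEdges S w = starEdges S w) := by
    refine (Pr_eq_bernoulliProb p _).trans (bernoulliProb_congr p univ fun E _ => ?_)
    rw [isMaxClique_iff_subset, inter_eq_right]
    refine and_congr_right' (forall₂_congr fun w hw => ?_)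
    rw [inter_assoc, inter_eq_right.2 (hstar w hw), inter_eq_right]
  have hfactor : ∀ w ∈ Sᶜ,
      bernoulliProb p (starEdges S w) (fun t => ¬ t = starEdges S w) = 1 - p ^ #S := fun w hw => by
    rw [bernoulliProb_not, bernoulliProb_eq_self, card_starEdges (mem_compl.1 hw)]
  rw [hevent, bernoulliProb_inter_sdiff p (subset_univ K) (· = K)
      (fun t => ∀ w ∈ Sᶜ, ¬ t ∩ starEdges S w = starEdges S w), bernoulliProb_eq_self,
    bernoulliProb_forall_inter p (starEdges S) (fun w t => ¬ t = starEdges S w) Sᶜ hstar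
      (pairwiseDisjoint_starEdges S), prod_congr rfl hfactor, prod_const, card_compl,
    Fintype.card_fin, card_cliqueEdges]

noncomputable def firstMomentBound (n j : ℕ) (p : ℝ) : ℝ :=
  (n : ℝ) ^ j * p ^ j.choose 2 * (1 - p ^ j) ^ (n - j)

lemma Pr_exists_isMaxClique_le {p : ℝ} (hp0 : 0 ≤ p) (hp1 : p ≤ 1) (j : ℕ) :
    Pr n p (fun E => ∃ S : Finset (Fin n), #S = j ∧ IsMaxClique E S) ≤
      firstMomentBound n j p := by
  have hevent : (fun E => ∃ S : Finset (Fin n), #S = j ∧ IsMaxClique E S) =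
      fun E => ∃ S ∈ powersetCard j univ, IsMaxClique E S := by
    simp [mem_powersetCard]
  rw [hevent]
  refine (Pr_exists_le_sum hp0 hp1 _ _).trans ?_
  rw [sum_congr rfl fun S hS => by rw [Pr_isMaxClique, mem_powersetCard_univ.1 hS],
    sum_const, card_powersetCard, card_univ, Fintype.card_fin, nsmul_eq_mul, firstMomentBound,
    mul_assoc]
  have hq : 0 ≤ 1 - p ^ j := sub_nonneg.2 (pow_le_one₀ hp0 hp1)
  gcongr
  exact_mod_cast Nat.choose_le_pow n j

end ErdosRenyi

section Estimates

open Real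

lemma one_sub_pow_le_exp_neg_mul {q : ℝ} (hq : q ≤ 1) (m : ℕ) :
    (1 - q) ^ m ≤ exp (-(q * m)) := by
  calc (1 - q) ^ m ≤ exp (-q) ^ m := pow_le_pow_left₀ (sub_nonneg.2 hq) (one_sub_le_exp_neg q) m
    _ = exp (-(q * m)) := by rw [← exp_nat_mul]; ring_nf

lemma rpow_mul_exp_neg_mul_le {a q c m : ℝ} (ha : 0 < a) (haq : a ≤ q) (hc : 0 ≤ c)
    (hcm : c ≤ a * m) : q ^ c * exp (-(q * m)) ≤ a ^ c * exp (-(a * m)) := by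
  have hq : 0 < q := ha.trans_le haq
  rw [rpow_def_of_pos hq, rpow_def_of_pos ha, ← exp_add, ← exp_add, exp_le_exp]
  have hlog : log q - log a ≤ (q - a) / a := by
    rw [← log_div hq.ne' ha.ne', sub_div, div_self ha.ne']
    exact log_le_sub_one_of_pos (div_pos hq ha)
  have hgain : c * ((q - a) / a) ≤ m * (q - a) := by
    rw [mul_div_assoc', div_le_iff₀ ha]
    nlinarith [sub_nonneg.2 haq]
  nlinarith

lemma pow_choose_two_succ_eq_rpow {p : ℝ} (hp : 0 ≤ p) (k : ℕ) :
    p ^ (k + 1).choose 2 = (p ^ (k + 1)) ^ ((k : ℝ) / 2) := by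
  rw [← rpow_natCast p (k + 1), ← rpow_mul hp, ← rpow_natCast, Nat.cast_choose_two]
  push_cast
  ring_nf

lemma firstMomentBound_succ_le {n k : ℕ} {a p : ℝ} (hp0 : 0 ≤ p) (hp1 : p ≤ 1) (ha : 0 < a)
    (hap : a ≤ p ^ (k + 1)) (ham : (k : ℝ) / 2 ≤ a * (n - (k + 1) : ℕ)) :
    firstMomentBound n (k + 1) p ≤
      n ^ (k + 1) * (a ^ ((k : ℝ) / 2) * exp (-(a * (n - (k + 1) : ℕ)))) := by
  have hq1 : p ^ (k + 1) ≤ 1 := pow_le_one₀ hp0 hp1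
  calc firstMomentBound n (k + 1) p
      = n ^ (k + 1) * ((p ^ (k + 1)) ^ ((k : ℝ) / 2) * (1 - p ^ (k + 1)) ^ (n - (k + 1))) := by
        rw [firstMomentBound, pow_choose_two_succ_eq_rpow hp0]; ring
    _ ≤ n ^ (k + 1) *
          ((p ^ (k + 1)) ^ ((k : ℝ) / 2) * exp (-(p ^ (k + 1) * (n - (k + 1) : ℕ)))) := by
        gcongr
        exact one_sub_pow_le_exp_neg_mul hq1 _
    _ ≤ n ^ (k + 1) * (a ^ ((k : ℝ) / 2) * exp (-(a * (n - (k + 1) : ℕ)))) := by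
        gcongr ?_ * ?_
        exact rpow_mul_exp_neg_mul_le ha hap (by positivity) ham

lemma firstMomentBound_le_exp {k n : ℕ} {p ω : ℝ} (hp1 : p ≤ 1) (hω : 0 ≤ ω)
    (hn : 2 * (k + 1) ≤ n) (hL : (k : ℝ) + 1 ≤ log n)
    (hp : ((((k : ℝ) / 2 + 1) * log n + ((k : ℝ) / 2) * log (log n) + ω) / n)
      ^ ((1 : ℝ) / (k + 1)) ≤ p) :
    firstMomentBound n (k + 1) p ≤ exp ((k : ℝ) / 2 * log (k + 1 + ω) + (k + 1) - ω) := by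
  set L := log n
  set c : ℝ := k / 2
  set T := (c + 1) * L + c * log L + ω with hTdef
  set a := T / n
  have hkc : 2 * c = k := by ring
  have hn0 : (0 : ℝ) < n := by exact_mod_cast (show 0 < n by omega)
  have hL0 : 0 < L := by linarith
  have hlogL : 0 ≤ log L := log_nonneg (by linarith)
  have hTup : T ≤ (k + 1 + ω) * L := by
    have h1 : c * log L ≤ c * L := mul_le_mul_of_nonneg_left (log_le_self hL0.le) (by positivity)
    have h2 : ω * 1 ≤ ω * L := mul_le_mul_of_nonneg_left (by linarith) hω
    nlinarith
  have hT : 0 < T := by positivity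
  have ha : 0 < a := div_pos hT hn0
  replace hp : a ^ ((k + 1 : ℕ) : ℝ)⁻¹ ≤ p := by simpa [one_div] using hp
  have hp0 : 0 ≤ p := (rpow_nonneg ha.le _).trans hp
  have hap : a ≤ p ^ (k + 1) := by
    rwa [rpow_inv_le_iff_of_pos ha.le hp0 (by positivity), rpow_natCast] at hp
  have ha1 : a ≤ 1 := hap.trans (pow_le_one₀ hp0 hp1)
  have han : a * n = T := div_mul_cancel₀ T hn0.ne'
  have ham : a * (n - (k + 1) : ℕ) = T - a * (k + 1) := by
    rw [Nat.cast_sub (by omega), mul_sub, han]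
    push_cast; ring
  have hcm : c ≤ a * (n - (k + 1) : ℕ) := by
    have : (2 * (k + 1) : ℝ) ≤ n := by exact_mod_cast hn
    nlinarith [mul_le_mul_of_nonneg_left this ha.le]
  calc firstMomentBound n (k + 1) p
      ≤ n ^ (k + 1) * (a ^ c * exp (-(a * (n - (k + 1) : ℕ)))) :=
        firstMomentBound_succ_le hp0 hp1 ha hap hcm
    _ ≤ n ^ (k + 1) * (a ^ c * exp (k + 1 - T)) := by
        gcongr
        nlinarith
    _ = exp (c * log (T / L) + (k + 1) - ω) := by
        have hnL : (n : ℝ) = exp L := (exp_log hn0).symm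
        rw [rpow_def_of_pos ha, log_div hT.ne' hn0.ne', log_div hT.ne' hL0.ne', hnL, log_exp,
          ← exp_nat_mul, ← exp_add, ← exp_add]
        congr 1
        push_cast
        linear_combination -hTdef - L * hkc
    _ ≤ exp (c * log (k + 1 + ω) + (k + 1) - ω) := by
        rw [exp_le_exp]
        gcongr
        exact (div_le_iff₀ hL0).2 hTup

lemma mul_log_le_half_add {c y : ℝ} (hc : 0 ≤ c) (hy : 0 < y) :
    c * log y ≤ y / 2 + c * log (2 * c + 1) := by
  have hc1 : 0 < 2 * c + 1 := by linarith
  have hlog : log y - log (2 * c + 1) ≤ y / (2 * c + 1) := by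
    rw [← log_div hy.ne' hc1.ne']
    linarith [log_le_sub_one_of_pos (div_pos hy hc1)]
  have hcy : c * (y / (2 * c + 1)) ≤ y / 2 := by
    rw [mul_div_assoc', div_le_div_iff₀ hc1 two_pos]
    nlinarith
  nlinarith [mul_le_mul_of_nonneg_left hlog hc]

lemma tendsto_exp_mul_log_add_sub_atTop {c : ℝ} (hc : 0 ≤ c) (d e : ℝ) :
    Tendsto (fun x => exp (c * log (d + x) + e - x)) atTop (𝓝 0) := by
  set C := d / 2 + c * log (2 * c + 1) + e with hC
  have hbound : ∀ᶠ x in atTop, c * log (d + x) + e - x ≤ C - x / 2 := by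
    filter_upwards [eventually_gt_atTop (-d)] with x hx
    rw [hC]
    linarith [mul_log_le_half_add hc (show 0 < d + x by linarith)]
  have hlin : Tendsto (fun x : ℝ => C - x / 2) atTop atBot :=
    tendsto_atBot_add_const_left _ C
      (tendsto_neg_atTop_atBot.comp (tendsto_id.atTop_div_const two_pos))
  exact tendsto_exp_atBot.comp (tendsto_atBot_mono' _ hbound hlin)

end Estimates

theorem stmt3_general (k : ℕ) (p ω : ℕ → ℝ)
    (hω : Tendsto ω atTop atTop)
    (hp0 : ∀ n, 0 ≤ p n) (hp1 : ∀ n, p n ≤ 1)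
    (hp : ∀ n : ℕ,
      ((((k : ℝ) / 2 + 1) * Real.log n + ((k : ℝ) / 2) * Real.log (Real.log n) + ω n) / n)
          ^ ((1 : ℝ) / (k + 1)) ≤ p n) :
    Tendsto (fun n : ℕ =>
        Pr n (p n) (fun E => ∃ S : Finset (Fin n), S.card = k + 1 ∧ IsMaxClique E S))
      atTop (𝓝 0) := by
  have hlog : Tendsto (fun n : ℕ => Real.log n) atTop atTop :=
    Real.tendsto_log_atTop.comp tendsto_natCast_atTop_atTop
  have hbound : ∀ᶠ n in atTop,
      Pr n (p n) (fun E => ∃ S : Finset (Fin n), S.card = k + 1 ∧ IsMaxClique E S) ≤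
        Real.exp ((k : ℝ) / 2 * Real.log (k + 1 + ω n) + (k + 1) - ω n) := by
    filter_upwards [hω.eventually_ge_atTop 0, hlog.eventually_ge_atTop ((k : ℝ) + 1),
      eventually_ge_atTop (2 * (k + 1))] with n hωn hLn hn
    exact (Pr_exists_isMaxClique_le (hp0 n) (hp1 n) (k + 1)).trans
      (firstMomentBound_le_exp (hp1 n) hωn hn hLn (hp n))
  have hlim := (tendsto_exp_mul_log_add_sub_atTop (c := (k : ℝ) / 2) (by positivity)
    (k + 1) (k + 1)).comp hω
  exact tendsto_of_tendsto_of_tendsto_of_le_of_le' tendsto_const_nhds hlim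
    (.of_forall fun n => Pr_nonneg (hp0 n) (hp1 n) _) hbound

/-- If `p ≥ (((k/2+1) log n + (k/2) log log n + ω(n))/n)^(1/(k+1))` with
`ω(n) → ∞`, then w.h.p. `G(n,p)` has no maximal `(k+1)`-clique. -/
theorem stmt3 (k : ℕ) (hk : 1 ≤ k) (p ω : ℕ → ℝ)
    (hω : Tendsto ω atTop atTop)
    (hp0 : ∀ n, 0 ≤ p n) (hp1 : ∀ n, p n ≤ 1)
    (hp : ∀ n : ℕ,
      ((((k : ℝ) / 2 + 1) * Real.log n + ((k : ℝ) / 2) * Real.log (Real.log n) + ω n) / n)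
          ^ ((1 : ℝ) / (k + 1)) ≤ p n) :
    Tendsto (fun n : ℕ =>
        Pr n (p n) (fun E => ∃ S : Finset (Fin n), S.card = k + 1 ∧ IsMaxClique E S))
      atTop (𝓝 0) :=
  stmt3_general k p ω hω hp0 hp1 hp
end
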